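/- Let f : ℝⁿ × ℝᵐ → ℝ satisfy (A2): f is twice continuously differentiable and ∇²f ⪰ δ I_{n+m} everywhere for some δ > 0. Let A₁₁ ∈ ℝ^{k×k}, B₁ ∈ ℝ^{k×m} with (A₁₁,B₁) controllable (im(B₁, A₁₁B₁, …, A₁₁^{k−1}B₁) = ℝᵏ), let P₁ ∈ ℝ^{n×k} have orthonormal columns and P₂ ∈ ℝ^{n×(n−k)}, and fix y₂* ∈ ℝ^{n−k}. Define g : ℝᵏ × ℝᵐ × ℝᵏ → ℝᵏ × ℝᵐ × ℝᵏ by g(z,u,ν) = (P₁ᵀ f_x(P₁ z + P₂ y₂*, u) + A₁₁ᵀ ν, f_u(P₁ z + P₂ y₂*, u) + B₁ᵀ ν, A₁₁ z + B₁ u). Then g is coercive: |g(z,u,ν)| → ∞ as |(z,u,ν)| → ∞. -/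

import Mathlib

open MeasureTheory Matrix Filter

namespace Turnpike

/-- Euclidean norm of a real vector. -/
noncomputable def vnorm {n : ℕ} (x : Fin n → ℝ) : ℝ := Real.sqrt (∑ i, (x i) ^ 2)

/-- Frobenius norm of a real matrix. -/
noncomputable def mnorm {n m : ℕ} (M : Matrix (Fin n) (Fin m) ℝ) : ℝ :=
  Real.sqrt (∑ i, ∑ j, (M i j) ^ 2)

/-- Euclidean norm of a complex vector. -/
noncomputable def cnorm {d : ℕ} (w : Fin d → ℂ) : ℝ := Real.sqrt (∑ i, ‖w i‖ ^ 2)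

/-- The state trajectory `X(t) = e^{tA} x + ∫₀ᵗ e^{(t-s)A} (B u(s) + b) ds`. -/
noncomputable def traj {n m : ℕ} (A : Matrix (Fin n) (Fin n) ℝ) (B : Matrix (Fin n) (Fin m) ℝ)
    (b x : Fin n → ℝ) (u : ℝ → Fin m → ℝ) (t : ℝ) : Fin n → ℝ :=
  (NormedSpace.exp (t • A)).mulVec x +
    ∫ s in (0:ℝ)..t, (NormedSpace.exp ((t - s) • A)).mulVec (B.mulVec (u s) + b)

/-- `u ∈ L²(0,T;ℝᵐ)`. -/
def IsL2 {m : ℕ} (T : ℝ) (u : ℝ → Fin m → ℝ) : Prop :=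
  MemLp u 2 (volume.restrict (Set.Ioc 0 T))

/-- The cost functional `J_T(x;u) = ∫₀ᵀ f(X(t),u(t)) dt`. -/
noncomputable def cost {n m : ℕ} (A : Matrix (Fin n) (Fin n) ℝ) (B : Matrix (Fin n) (Fin m) ℝ)
    (b : Fin n → ℝ) (f : (Fin n → ℝ) → (Fin m → ℝ) → ℝ) (T : ℝ) (x : Fin n → ℝ)
    (u : ℝ → Fin m → ℝ) : ℝ :=
  ∫ t in (0:ℝ)..T, f (traj A B b x u t) (u t)

/-- `u` is an optimal control for Problem (LC)_T with initial state `x`. -/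
def OptimalControl {n m : ℕ} (A : Matrix (Fin n) (Fin n) ℝ) (B : Matrix (Fin n) (Fin m) ℝ)
    (b : Fin n → ℝ) (f : (Fin n → ℝ) → (Fin m → ℝ) → ℝ) (T : ℝ) (x : Fin n → ℝ)
    (u : ℝ → Fin m → ℝ) : Prop :=
  IsL2 T u ∧ ∀ v : ℝ → Fin m → ℝ, IsL2 T v → cost A B b f T x u ≤ cost A B b f T x v

/-- Kalman rank condition for controllability of `(A,B)`. -/
def Controllable {k m : ℕ} (A : Matrix (Fin k) (Fin k) ℝ) (B : Matrix (Fin k) (Fin m) ℝ) : Prop :=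
  ∀ v : Fin k → ℝ, (∀ i : ℕ, i < k → Matrix.vecMul v (A ^ i * B) = 0) → v = 0

/-- Observability of the pair `(A,C)`. -/
def Observable {n : ℕ} (A C : Matrix (Fin n) (Fin n) ℝ) : Prop :=
  ∀ v : Fin n → ℝ, (∀ i : ℕ, i < n → (C * A ^ i).mulVec v = 0) → v = 0

/-- A Kalman controllable decomposition of `(A,B)` given by `P₁, P₂` with `P = (P₁,P₂)`
orthogonal, columns of `P₁` spanning the controllable subspace. -/
structure KalmanDec (n k l m : ℕ) (A : Matrix (Fin n) (Fin n) ℝ) (B : Matrix (Fin n) (Fin m) ℝ)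
    (P₁ : Matrix (Fin n) (Fin k) ℝ) (P₂ : Matrix (Fin n) (Fin l) ℝ) : Prop where
  orth₁ : P₁ᵀ * P₁ = 1
  orth₂ : P₂ᵀ * P₂ = 1
  orth₁₂ : P₁ᵀ * P₂ = 0
  complete : P₁ * P₁ᵀ + P₂ * P₂ᵀ = 1
  lowerZero : P₂ᵀ * A * P₁ = 0
  inputZero : P₂ᵀ * B = 0
  ctrb : Controllable (P₁ᵀ * A * P₁) (P₁ᵀ * B)

/-- `𝒢₁`: real vectors lying in the sum of the generalized eigenspaces of `A₂₂` associated
with eigenvalues of negative real part. -/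
noncomputable def G1 {l : ℕ} (A22 : Matrix (Fin l) (Fin l) ℝ) : Set (Fin l → ℝ) :=
  {y | (fun i => (y i : ℂ)) ∈ Submodule.span ℂ
      {w : Fin l → ℂ | ∃ μ : ℂ, μ.re < 0 ∧
        ((A22.map (Complex.ofReal) - μ • 1) ^ l).mulVec w = 0}}

/-- `𝒢₂ = ker A₂₂`. -/
def G2 {l : ℕ} (A22 : Matrix (Fin l) (Fin l) ℝ) : Set (Fin l → ℝ) := {y | A22.mulVec y = 0}

/-- `w ∈ 𝒢₁ ⊕ 𝒢₂`. -/
def Feas {l : ℕ} (A22 : Matrix (Fin l) (Fin l) ℝ) (w : Fin l → ℝ) : Prop :=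
  ∃ y₁ ∈ G1 A22, ∃ y₂ ∈ G2 A22, w = y₁ + y₂

/-- `IsQ2 A22 w y₂` says `y₂ = Q₂ w`: `y₂ ∈ 𝒢₂` and `w - y₂ ∈ 𝒢₁`
(in particular `w ∈ 𝒢₁ ⊕ 𝒢₂`). -/
def IsQ2 {l : ℕ} (A22 : Matrix (Fin l) (Fin l) ℝ) (w y₂ : Fin l → ℝ) : Prop :=
  y₂ ∈ G2 A22 ∧ w - y₂ ∈ G1 A22

/-- Membership `(z,u) ∈ 𝒱ₓ`. -/
def InV {n m l : ℕ} (A : Matrix (Fin n) (Fin n) ℝ) (B : Matrix (Fin n) (Fin m) ℝ)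
    (b : Fin n → ℝ) (P₂ : Matrix (Fin n) (Fin l) ℝ) (c : Fin l → ℝ) (x : Fin n → ℝ)
    (z : Fin n → ℝ) (u : Fin m → ℝ) : Prop :=
  A.mulVec z + B.mulVec u + b = 0 ∧
  IsQ2 (P₂ᵀ * A * P₂) (P₂ᵀ.mulVec x + c) (P₂ᵀ.mulVec z + c)

/-- Partial gradient `f_x`. -/
noncomputable def gradX {n m : ℕ} (f : (Fin n → ℝ) → (Fin m → ℝ) → ℝ)
    (x : Fin n → ℝ) (u : Fin m → ℝ) : Fin n → ℝ :=
  fun i => deriv (fun s : ℝ => f (x + s • (Pi.single i 1 : Fin n → ℝ)) u) 0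

/-- Partial gradient `f_u`. -/
noncomputable def gradU {n m : ℕ} (f : (Fin n → ℝ) → (Fin m → ℝ) → ℝ)
    (x : Fin n → ℝ) (u : Fin m → ℝ) : Fin m → ℝ :=
  fun j => deriv (fun s : ℝ => f x (u + s • (Pi.single j 1 : Fin m → ℝ))) 0

/-- Full Hessian matrix `∇²f(x,u)` on `ℝⁿ × ℝᵐ`, indexed by `Fin n ⊕ Fin m`. -/
noncomputable def hessMat {n m : ℕ} (f : (Fin n → ℝ) → (Fin m → ℝ) → ℝ)
    (x : Fin n → ℝ) (u : Fin m → ℝ) : Matrix (Fin n ⊕ Fin m) (Fin n ⊕ Fin m) ℝ :=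
  fun i j => deriv (fun s : ℝ => deriv (fun r : ℝ =>
      f (fun a => (Sum.elim x u + s • (Pi.single i 1 : Fin n ⊕ Fin m → ℝ) + r • (Pi.single j 1 : Fin n ⊕ Fin m → ℝ)) (Sum.inl a))
        (fun a => (Sum.elim x u + s • (Pi.single i 1 : Fin n ⊕ Fin m → ℝ) + r • (Pi.single j 1 : Fin n ⊕ Fin m → ℝ)) (Sum.inr a))) 0) 0

/-- Assumption (A2): `f` is `C²` and `∇²f ⪰ δ I` everywhere. -/
def A2Hyp {n m : ℕ} (f : (Fin n → ℝ) → (Fin m → ℝ) → ℝ) (δ : ℝ) : Prop :=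
  ContDiff ℝ 2 (fun p : (Fin n → ℝ) × (Fin m → ℝ) => f p.1 p.2) ∧
  ∀ (x : Fin n → ℝ) (u : Fin m → ℝ),
    (hessMat f x u - δ • (1 : Matrix (Fin n ⊕ Fin m) (Fin n ⊕ Fin m) ℝ)).PosSemidef

/-- Second partial derivative matrix `f_{xu}(x,u) ∈ ℝ^{n×m}`. -/
noncomputable def fxuMat {n m : ℕ} (f : (Fin n → ℝ) → (Fin m → ℝ) → ℝ)
    (x : Fin n → ℝ) (u : Fin m → ℝ) : Matrix (Fin n) (Fin m) ℝ :=
  fun i j => deriv (fun s : ℝ => gradU f (x + s • (Pi.single i 1 : Fin n → ℝ)) u j) 0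

/-- Second partial derivative matrix `f_{uu}(x,u) ∈ ℝ^{m×m}`. -/
noncomputable def fuuMat {n m : ℕ} (f : (Fin n → ℝ) → (Fin m → ℝ) → ℝ)
    (x : Fin n → ℝ) (u : Fin m → ℝ) : Matrix (Fin m) (Fin m) ℝ :=
  fun i j => deriv (fun s : ℝ => gradU f x (u + s • (Pi.single i 1 : Fin m → ℝ)) j) 0

/-- Assumption (A3). -/
def A3Hyp {n m : ℕ} (f : (Fin n → ℝ) → (Fin m → ℝ) → ℝ) : Prop :=
  ∀ r > (0:ℝ), ∃ γ > (0:ℝ), ∀ (x : Fin n → ℝ) (u : Fin m → ℝ), vnorm x ≤ r →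
    mnorm (fxuMat f x u * (fuuMat f x u)⁻¹) ≤ γ

/-- Value function of Problem (LC)_T. -/
noncomputable def VT {n m : ℕ} (A : Matrix (Fin n) (Fin n) ℝ) (B : Matrix (Fin n) (Fin m) ℝ)
    (b : Fin n → ℝ) (f : (Fin n → ℝ) → (Fin m → ℝ) → ℝ) (T : ℝ) (x : Fin n → ℝ) : ℝ :=
  sInf {r | ∃ u : ℝ → Fin m → ℝ, IsL2 T u ∧ r = cost A B b f T x u}

/-- Optimal value of the static Problem (O). -/
noncomputable def Vstar {n m l : ℕ} (A : Matrix (Fin n) (Fin n) ℝ)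
    (B : Matrix (Fin n) (Fin m) ℝ) (b : Fin n → ℝ) (P₂ : Matrix (Fin n) (Fin l) ℝ)
    (c : Fin l → ℝ) (f : (Fin n → ℝ) → (Fin m → ℝ) → ℝ) (x : Fin n → ℝ) : ℝ :=
  sInf {r | ∃ z u, InV A B b P₂ c x z u ∧ r = f z u}

/-- The matrix `Π(s) = ∫₀¹ (1-θ) ∇²f((1-θ)x* + θX(s), (1-θ)u* + θu(s)) dθ`, entrywise. -/
noncomputable def PiMat {n m : ℕ} (f : (Fin n → ℝ) → (Fin m → ℝ) → ℝ)
    (xs : Fin n → ℝ) (us : Fin m → ℝ) (X : ℝ → Fin n → ℝ) (u : ℝ → Fin m → ℝ)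
    (s : ℝ) : Matrix (Fin n ⊕ Fin m) (Fin n ⊕ Fin m) ℝ :=
  fun i j => ∫ θ in (0:ℝ)..1,
    (1 - θ) * hessMat f ((1 - θ) • xs + θ • X s) ((1 - θ) • us + θ • u s) i j

/-!
Write `w = (z, u)`, `Φ(w) = f(P₁ z + P₂ y₂*, u)` and `K = (A₁₁ B₁)`, so that
`g(w, ν) = (∇Φ(w) + Kᵀν, K w)`. Since `P₁` has orthonormal columns, `(z, u) ↦ (P₁ z, u)` is an
isometry, hence `∇²Φ ⪰ δ I` and `∇Φ` is `δ`-strongly monotone; controllability makes `Kᵀ`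
injective. If `g(w, ν)` is bounded, so is `K w`, and `w = q + p` with `q` bounded and `K p = 0`.
Strong monotonicity between `w` and `q` bounds `p`, because the multiplier term
`⟪Kᵀν, p⟫ = ⟪ν, K p⟫` vanishes; then `Kᵀν = ∇Φ(w) + Kᵀν - ∇Φ(w)` is bounded, and so is `ν`.
-/

open scoped RealInnerProductSpace Gradient
open WithLp (toLp ofLp)

section Calculus

variable {E : Type*} [NormedAddCommGroup E] [NormedSpace ℝ E]

theorem lineDeriv_lineDeriv_eq_fderiv_fderiv {F : E → ℝ} (hF : ContDiff ℝ 2 F) (x v w : E) :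
    lineDeriv ℝ (fun y => lineDeriv ℝ F y w) x v = fderiv ℝ (fderiv ℝ F) x v w := by
  have hF1 : ContDiff ℝ 1 (fderiv ℝ F) := hF.fderiv_right (by norm_num)
  have hinner : (fun y => lineDeriv ℝ F y w) = fun y => fderiv ℝ F y w := funext fun y =>
    ((hF.differentiable (by norm_num)) y).lineDeriv_eq_fderiv
  have hd : Differentiable ℝ fun y => fderiv ℝ F y w :=
    fun y => ((hF1.differentiable one_ne_zero) y).clm_apply (differentiableAt_const w)
  rw [hinner, (hd x).lineDeriv_eq_fderiv,
    fderiv_clm_apply ((hF1.differentiable one_ne_zero) x) (differentiableAt_const w)]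
  simp

theorem iteratedFDeriv_two_comp_affine {E' : Type*} [NormedAddCommGroup E'] [NormedSpace ℝ E']
    {F : E' → ℝ} (hF : ContDiff ℝ 2 F) (L : E →L[ℝ] E') (c : E') (x v w : E) :
    iteratedFDeriv ℝ 2 (fun y => F (L y + c)) x ![v, w] =
      iteratedFDeriv ℝ 2 F (L x + c) ![L v, L w] := by
  have hFc : ContDiff ℝ 2 fun y => F (y + c) := hF.comp (contDiff_id.add contDiff_const)
  have := L.iteratedFDeriv_comp_right hFc x (i := 2) le_rfl
  simp only [Function.comp_def] at this
  rw [this, ContinuousMultilinearMap.compContinuousLinearMap_apply,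
    iteratedFDeriv_comp_add_right]
  congr 1
  ext i
  fin_cases i <;> rfl

end Calculus

section InnerProductSpace

variable {E : Type*} [NormedAddCommGroup E] [InnerProductSpace ℝ E]

theorem norm_le_div_of_mul_norm_sq_le_inner {δ : ℝ} (hδ : 0 < δ) {x b : E}
    (h : δ * ‖x‖ ^ 2 ≤ ⟪b, x⟫) : ‖x‖ ≤ ‖b‖ / δ := by
  rw [le_div_iff₀ hδ]
  rcases (norm_nonneg x).eq_or_lt with hx | hx
  · rw [← hx, zero_mul]; exact norm_nonneg b
  · have := h.trans (real_inner_le_norm b x)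
    nlinarith

variable [CompleteSpace E]

theorem continuous_gradient {F : E → ℝ} (hF : ContDiff ℝ 1 F) : Continuous (∇ F) :=
  (InnerProductSpace.toDual ℝ E).symm.continuous.comp (hF.continuous_fderiv one_ne_zero)

theorem gradient_comp_affine {E' : Type*} [NormedAddCommGroup E'] [InnerProductSpace ℝ E']
    [CompleteSpace E'] {F : E' → ℝ} (hF : Differentiable ℝ F) (L : E →L[ℝ] E') (c : E') (x : E) :
    ∇ (fun y => F (L y + c)) x = L.adjoint (∇ F (L x + c)) := by
  have hcomp : HasFDerivAt (fun y => F (L y + c)) ((fderiv ℝ F (L x + c)).comp L) x :=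
    (hF _).hasFDerivAt.comp x (L.hasFDerivAt.add_const c)
  refine ext_inner_right ℝ fun v => ?_
  rw [inner_gradient_left, hcomp.fderiv, ContinuousLinearMap.adjoint_inner_left,
    inner_gradient_left]
  rfl

theorem mul_norm_sub_sq_le_inner_gradient_sub {F : E → ℝ} {δ : ℝ} (hF : ContDiff ℝ 2 F)
    (hH : ∀ x v, δ * ‖v‖ ^ 2 ≤ iteratedFDeriv ℝ 2 F x ![v, v]) (x y : E) :
    δ * ‖x - y‖ ^ 2 ≤ ⟪∇ F x - ∇ F y, x - y⟫ := by
  set v := x - y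
  have hF1 : ContDiff ℝ 1 (fderiv ℝ F) := hF.fderiv_right (by norm_num)
  have hψ : ∀ t : ℝ, HasDerivAt (fun t : ℝ => fderiv ℝ F (y + t • v) v)
      (fderiv ℝ (fderiv ℝ F) (y + t • v) v v) t := by
    intro t
    have hline : HasDerivAt (fun t : ℝ => y + t • v) v t := by
      simpa using ((hasDerivAt_id t).smul_const v).const_add y
    exact ((hF1.differentiable one_ne_zero _).hasFDerivAt.comp_hasDerivAt t hline).clm_apply
      (hasDerivAt_const t v) |>.congr_deriv (by simp)
  have := mul_sub_le_image_sub_of_le_deriv (fun t => (hψ t).differentiableAt)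
    (C := δ * ‖v‖ ^ 2) (fun t => by
      simpa [(hψ t).deriv, iteratedFDeriv_two_apply] using hH (y + t • v) v) zero_le_one
  simpa [v, inner_sub_left, inner_gradient_left] using this

end InnerProductSpace

theorem exists_preimage_norm_le_of_finiteDimensional {E F : Type*}
    [NormedAddCommGroup E] [NormedSpace ℝ E] [FiniteDimensional ℝ E]
    [NormedAddCommGroup F] [NormedSpace ℝ F] (K : E →ₗ[ℝ] F) :
    ∃ C > 0, ∀ w, ∃ q, K q = K w ∧ ‖q‖ ≤ C * ‖K w‖ := by
  obtain ⟨C, hC0, hC⟩ := (LinearMap.toContinuousLinearMap K.rangeRestrict).exists_preimage_norm_le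
    K.surjective_rangeRestrict
  refine ⟨C, hC0, fun w => ?_⟩
  obtain ⟨q, hq, hqC⟩ := hC (K.rangeRestrict w)
  exact ⟨q, congrArg Subtype.val hq, hqC⟩

section Coercive

variable {E F : Type*} [NormedAddCommGroup E] [InnerProductSpace ℝ E] [FiniteDimensional ℝ E]
  [NormedAddCommGroup F] [InnerProductSpace ℝ F] [FiniteDimensional ℝ F]

theorem exists_norm_le_of_kkt_residual_le {G : E → E} {δ : ℝ} (hG : Continuous G) (hδ : 0 < δ)
    (hmono : ∀ w w', δ * ‖w - w'‖ ^ 2 ≤ ⟪G w - G w', w - w'⟫) {K : E →ₗ[ℝ] F}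
    (hK : Function.Injective K.adjoint) (R : ℝ) :
    ∃ M, ∀ w ν, ‖G w + K.adjoint ν‖ ≤ R → ‖K w‖ ≤ R → ‖w‖ ≤ M ∧ ‖ν‖ ≤ M := by
  obtain ⟨C, hC0, hC⟩ := exists_preimage_norm_le_of_finiteDimensional K
  obtain ⟨σ, -, hσ⟩ := K.adjoint.injective_iff_antilipschitz.1 hK
  obtain ⟨φ₁, hφ₁⟩ := (isCompact_closedBall (0 : E) (C * R)).exists_bound_of_continuousOn
    hG.continuousOn
  set ρ := C * R + (R + φ₁) / δ
  obtain ⟨φ₂, hφ₂⟩ := (isCompact_closedBall (0 : E) ρ).exists_bound_of_continuousOn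
    hG.continuousOn
  refine ⟨max ρ (σ * (R + φ₂)), fun w ν ha hb => ?_⟩
  obtain ⟨q, hKq, hq⟩ := hC w
  have hqR : ‖q‖ ≤ C * R := hq.trans (by gcongr)
  have hwq : ‖w - q‖ ≤ (R + φ₁) / δ := by
    have key : ⟪G w - G q, w - q⟫ = ⟪(G w + K.adjoint ν) - G q, w - q⟫ := by
      rw [add_sub_right_comm, inner_add_left, LinearMap.adjoint_inner_left, map_sub, hKq,
        sub_self, inner_zero_right, add_zero]
    refine (norm_le_div_of_mul_norm_sq_le_inner hδ (key ▸ hmono w q)).trans ?_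
    gcongr
    exact (norm_sub_le _ _).trans (add_le_add ha (hφ₁ q (mem_closedBall_zero_iff.2 hqR)))
  have hw : ‖w‖ ≤ ρ := (norm_le_insert' w q).trans (add_le_add hqR hwq)
  have hν : ‖ν‖ ≤ σ * (R + φ₂) := by
    refine (hσ.le_mul_norm (map_zero _) ν).trans ?_
    gcongr
    calc ‖K.adjoint ν‖ = ‖(G w + K.adjoint ν) - G w‖ := by rw [add_sub_cancel_left]
      _ ≤ R + φ₂ := (norm_sub_le _ _).trans (add_le_add ha (hφ₂ w (mem_closedBall_zero_iff.2 hw)))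
  exact ⟨hw.trans (le_max_left _ _), hν.trans (le_max_right _ _)⟩

theorem kkt_coercive {G : E → E} {δ : ℝ} (hG : Continuous G) (hδ : 0 < δ)
    (hmono : ∀ w w', δ * ‖w - w'‖ ^ 2 ≤ ⟪G w - G w', w - w'⟫) {K : E →ₗ[ℝ] F}
    (hK : Function.Injective K.adjoint) (R : ℝ) :
    ∃ M, ∀ w ν, M ≤ √(‖w‖ ^ 2 + ‖ν‖ ^ 2) → R ≤ √(‖G w + K.adjoint ν‖ ^ 2 + ‖K w‖ ^ 2) := by
  obtain ⟨M, hM⟩ := exists_norm_le_of_kkt_residual_le hG hδ hmono hK R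
  refine ⟨2 * M + 1, fun w ν hwν => ?_⟩
  by_contra! hR
  obtain ⟨hw, hν⟩ := hM w ν
    ((Real.le_sqrt_of_sq_le (le_add_of_nonneg_right (sq_nonneg _))).trans hR.le)
    ((Real.le_sqrt_of_sq_le (le_add_of_nonneg_left (sq_nonneg _))).trans hR.le)
  have : √(‖w‖ ^ 2 + ‖ν‖ ^ 2) ≤ ‖w‖ + ‖ν‖ := by
    rw [Real.sqrt_le_iff]; constructor <;> nlinarith [norm_nonneg w, norm_nonneg ν]
  linarith

end Coercive

theorem mul_norm_sq_le_of_posSemidef_sub {ι : Type*} [Fintype ι] [DecidableEq ι]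
    {B : EuclideanSpace ℝ ι →L[ℝ] EuclideanSpace ℝ ι →L[ℝ] ℝ} {H : Matrix ι ι ℝ} {δ : ℝ}
    (hH : ∀ i j, B (EuclideanSpace.single i 1) (EuclideanSpace.single j 1) = H i j)
    (hpos : (H - δ • 1).PosSemidef) (v : EuclideanSpace ℝ ι) : δ * ‖v‖ ^ 2 ≤ B v v := by
  have hB : B v v = ofLp v ⬝ᵥ H *ᵥ ofLp v := by
    have hmat : LinearMap.toMatrix₂ (PiLp.basisFun 2 ℝ ι) (PiLp.basisFun 2 ℝ ι) B.toLinearMap₁₂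
        = H := by
      ext i j; simpa [LinearMap.toMatrix₂_apply] using hH i j
    have hrepr : ⇑((PiLp.basisFun 2 ℝ ι).repr v) = ofLp v := funext (PiLp.basisFun_repr 2 ℝ ι v)
    simpa [hmat, hrepr] using apply_eq_dotProduct_toMatrix₂_mulVec (PiLp.basisFun 2 ℝ ι)
      (PiLp.basisFun 2 ℝ ι) B.toLinearMap₁₂ v v
  have := hpos.dotProduct_mulVec_nonneg (ofLp v)
  simp only [star_trivial, sub_mulVec, dotProduct_sub, smul_mulVec, one_mulVec,
    dotProduct_smul, smul_eq_mul] at this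
  rw [hB, EuclideanSpace.real_norm_sq_eq]
  simpa [dotProduct, sq] using this
theorem norm_toEuclideanLin_of_transpose_mul_self {ι κ : Type*} [Fintype ι] [Fintype κ]
    [DecidableEq κ] {M : Matrix ι κ ℝ} (hM : Mᵀ * M = 1) (v : EuclideanSpace ℝ κ) :
    ‖M.toEuclideanLin v‖ = ‖v‖ := by
  have h : (M *ᵥ ofLp v) ᵥ* M = ofLp v := by
    rw [← vecMul_transpose, vecMul_vecMul, hM, vecMul_one]
  rw [← sq_eq_sq₀ (norm_nonneg _) (norm_nonneg _), ← real_inner_self_eq_norm_sq,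
    ← real_inner_self_eq_norm_sq, EuclideanSpace.inner_eq_star_dotProduct,
    EuclideanSpace.inner_eq_star_dotProduct]
  simp [dotProduct_mulVec, h]

theorem Controllable.eq_zero_of_vecMul_eq_zero {k m : ℕ} {A : Matrix (Fin k) (Fin k) ℝ}
    {B : Matrix (Fin k) (Fin m) ℝ} (hc : Controllable A B) {v : Fin k → ℝ}
    (hA : v ᵥ* A = 0) (hB : v ᵥ* B = 0) : v = 0 :=
  hc v fun i _ => by
    cases i with
    | zero => simpa using hB
    | succ i => rw [pow_succ', Matrix.mul_assoc, ← vecMul_vecMul, hA, zero_vecMul]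

theorem vnorm_eq_norm {d : ℕ} (x : Fin d → ℝ) : vnorm x = ‖toLp 2 x‖ := by
  rw [EuclideanSpace.norm_eq]; simp [vnorm]

theorem norm_toLp_sumElim_sq {ι κ : Type*} [Fintype ι] [Fintype κ] (a : ι → ℝ) (b : κ → ℝ) :
    ‖toLp 2 (Sum.elim a b)‖ ^ 2 = ‖toLp 2 a‖ ^ 2 + ‖toLp 2 b‖ ^ 2 := by
  simp [EuclideanSpace.real_norm_sq_eq, Fintype.sum_sum_type]

section Stacked

variable {n m : ℕ} {f : (Fin n → ℝ) → (Fin m → ℝ) → ℝ}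

variable (f) in
noncomputable def stacked : EuclideanSpace ℝ (Fin n ⊕ Fin m) → ℝ :=
  fun w => f (fun a => w (Sum.inl a)) (fun a => w (Sum.inr a))

theorem contDiff_stacked (hf : ContDiff ℝ 2 fun p : (Fin n → ℝ) × (Fin m → ℝ) => f p.1 p.2) :
    ContDiff ℝ 2 (stacked f) :=
  hf.comp (f := fun w : EuclideanSpace ℝ (Fin n ⊕ Fin m) =>
    ((fun a => w (Sum.inl a), fun a => w (Sum.inr a)) : (Fin n → ℝ) × (Fin m → ℝ))) (by fun_prop)

theorem hessMat_eq_fderiv_fderiv (hf : ContDiff ℝ 2 (stacked f)) (x : Fin n → ℝ)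
    (u : Fin m → ℝ) (i j : Fin n ⊕ Fin m) :
    hessMat f x u i j = fderiv ℝ (fderiv ℝ (stacked f)) (toLp 2 (Sum.elim x u))
      (EuclideanSpace.single i 1) (EuclideanSpace.single j 1) := by
  rw [← lineDeriv_lineDeriv_eq_fderiv_fderiv hf]
  -- `hessMat` is literally this iterated line derivative, written out in coordinates.
  rfl

theorem mul_norm_sq_le_iteratedFDeriv_stacked {δ : ℝ} (hA2 : A2Hyp f δ)
    (y v : EuclideanSpace ℝ (Fin n ⊕ Fin m)) :
    δ * ‖v‖ ^ 2 ≤ iteratedFDeriv ℝ 2 (stacked f) y ![v, v] := by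
  have hy : toLp 2 (Sum.elim (fun a => y (Sum.inl a)) (fun a => y (Sum.inr a))) = y :=
    Sum.elim_comp_inl_inr (ofLp y) ▸ WithLp.toLp_ofLp 2 y
  rw [iteratedFDeriv_two_apply]
  refine mul_norm_sq_le_of_posSemidef_sub
    (H := hessMat f (fun a => y (Sum.inl a)) (fun a => y (Sum.inr a))) (fun i j => ?_) (hA2.2 _ _) v
  rw [hessMat_eq_fderiv_fderiv (contDiff_stacked hA2.1), hy]

theorem gradient_stacked (hf : Differentiable ℝ (stacked f)) (x : Fin n → ℝ) (u : Fin m → ℝ) :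
    ∇ (stacked f) (toLp 2 (Sum.elim x u)) = toLp 2 (Sum.elim (gradX f x u) (gradU f x u)) := by
  ext i
  have hi : (∇ (stacked f) (toLp 2 (Sum.elim x u))) i =
      lineDeriv ℝ (stacked f) (toLp 2 (Sum.elim x u)) (EuclideanSpace.single i 1) := by
    rw [(hf _).lineDeriv_eq_fderiv, ← inner_gradient_left, EuclideanSpace.inner_single_right]
    simp
  rw [hi]
  cases i <;>
  · refine congrArg (fun φ : ℝ → ℝ => deriv φ 0) (funext fun s => ?_)
    simp only [stacked]
    congr 1 <;> funext a <;> simp [Pi.single_apply]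

end Stacked

section Reduction

variable {n k l m : ℕ}

noncomputable def embedCLM (P₁ : Matrix (Fin n) (Fin k) ℝ) :
    EuclideanSpace ℝ (Fin k ⊕ Fin m) →L[ℝ] EuclideanSpace ℝ (Fin n ⊕ Fin m) :=
  LinearMap.toContinuousLinearMap (fromBlocks P₁ 0 0 1).toEuclideanLin

theorem embedCLM_toLp (P₁ : Matrix (Fin n) (Fin k) ℝ) (z : Fin k → ℝ) (u : Fin m → ℝ) :
    embedCLM P₁ (toLp 2 (Sum.elim z u)) = toLp 2 (Sum.elim (P₁ *ᵥ z) u) := by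
  simp [embedCLM, fromBlocks_mulVec]

theorem adjoint_embedCLM_toLp (P₁ : Matrix (Fin n) (Fin k) ℝ) (g : Fin n → ℝ) (h : Fin m → ℝ) :
    (embedCLM P₁).adjoint (toLp 2 (Sum.elim g h)) = toLp 2 (Sum.elim (P₁ᵀ *ᵥ g) h) := by
  rw [embedCLM, ← LinearMap.adjoint_toContinuousLinearMap,
    ← toEuclideanLin_conjTranspose_eq_adjoint]
  simp [fromBlocks_transpose, fromBlocks_mulVec]

theorem norm_embedCLM {P₁ : Matrix (Fin n) (Fin k) ℝ} (hP₁ : P₁ᵀ * P₁ = 1)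
    (v : EuclideanSpace ℝ (Fin k ⊕ Fin m)) : ‖embedCLM P₁ v‖ = ‖v‖ :=
  norm_toEuclideanLin_of_transpose_mul_self
    (by simp [fromBlocks_transpose, fromBlocks_multiply, hP₁, ← fromBlocks_one]) v

noncomputable def constraintMap (A11 : Matrix (Fin k) (Fin k) ℝ) (B1 : Matrix (Fin k) (Fin m) ℝ) :
    EuclideanSpace ℝ (Fin k ⊕ Fin m) →ₗ[ℝ] EuclideanSpace ℝ (Fin k) :=
  (fromCols A11 B1).toEuclideanLin

theorem constraintMap_toLp (A11 : Matrix (Fin k) (Fin k) ℝ) (B1 : Matrix (Fin k) (Fin m) ℝ)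
    (z : Fin k → ℝ) (u : Fin m → ℝ) :
    constraintMap A11 B1 (toLp 2 (Sum.elim z u)) = toLp 2 (A11 *ᵥ z + B1 *ᵥ u) := by
  simp [constraintMap]

theorem adjoint_constraintMap_toLp (A11 : Matrix (Fin k) (Fin k) ℝ)
    (B1 : Matrix (Fin k) (Fin m) ℝ) (ν : Fin k → ℝ) :
    (constraintMap A11 B1).adjoint (toLp 2 ν) = toLp 2 (Sum.elim (A11ᵀ *ᵥ ν) (B1ᵀ *ᵥ ν)) := by
  rw [constraintMap, ← toEuclideanLin_conjTranspose_eq_adjoint]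
  simp [transpose_fromCols, fromRows_mulVec]

theorem injective_adjoint_constraintMap {A11 : Matrix (Fin k) (Fin k) ℝ}
    {B1 : Matrix (Fin k) (Fin m) ℝ} (hc : Controllable A11 B1) :
    Function.Injective (constraintMap A11 B1).adjoint := by
  refine (injective_iff_map_eq_zero _).2 fun ν hν => ?_
  rw [← WithLp.toLp_ofLp 2 ν, adjoint_constraintMap_toLp] at hν
  rw [WithLp.toLp_eq_zero, ← Sum.elim_zero_zero, Sum.elim_eq_iff, mulVec_transpose,
    mulVec_transpose] at hν
  exact (WithLp.ofLp_eq_zero 2).1 (hc.eq_zero_of_vecMul_eq_zero hν.1 hν.2)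

end Reduction

section ReducedObjective

variable {n k l m : ℕ} {f : (Fin n → ℝ) → (Fin m → ℝ) → ℝ} {P₁ : Matrix (Fin n) (Fin k) ℝ}
  {P₂ : Matrix (Fin n) (Fin l) ℝ} {y2s : Fin l → ℝ}

variable (f P₁ P₂ y2s) in
noncomputable def reducedObjective : EuclideanSpace ℝ (Fin k ⊕ Fin m) → ℝ :=
  fun w => stacked f (embedCLM P₁ w + toLp 2 (Sum.elim (P₂ *ᵥ y2s) 0))

theorem contDiff_reducedObjective (hf : ContDiff ℝ 2 (stacked f)) :
    ContDiff ℝ 2 (reducedObjective f P₁ P₂ y2s) :=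
  hf.comp ((embedCLM P₁).contDiff.add contDiff_const)

theorem mul_norm_sq_le_iteratedFDeriv_reducedObjective {δ : ℝ} (hA2 : A2Hyp f δ)
    (hP₁ : P₁ᵀ * P₁ = 1) (x v : EuclideanSpace ℝ (Fin k ⊕ Fin m)) :
    δ * ‖v‖ ^ 2 ≤ iteratedFDeriv ℝ 2 (reducedObjective f P₁ P₂ y2s) x ![v, v] := by
  unfold reducedObjective
  rw [iteratedFDeriv_two_comp_affine (contDiff_stacked hA2.1), ← norm_embedCLM hP₁ v]
  exact mul_norm_sq_le_iteratedFDeriv_stacked hA2 _ _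

theorem gradient_reducedObjective (hf : Differentiable ℝ (stacked f)) (z : Fin k → ℝ)
    (u : Fin m → ℝ) :
    ∇ (reducedObjective f P₁ P₂ y2s) (toLp 2 (Sum.elim z u)) =
      toLp 2 (Sum.elim (P₁ᵀ *ᵥ gradX f (P₁ *ᵥ z + P₂ *ᵥ y2s) u)
        (gradU f (P₁ *ᵥ z + P₂ *ᵥ y2s) u)) := by
  unfold reducedObjective
  rw [gradient_comp_affine hf, embedCLM_toLp, ← WithLp.toLp_add, ← Sum.elim_add_add, add_zero,
    add_comm (P₁ *ᵥ z), gradient_stacked hf, adjoint_embedCLM_toLp]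

end ReducedObjective

/-- Coercivity of the stationarity map `g` (part of the proof of Theorem 5.2). -/
theorem stationarity_map_coercive {n k l m : ℕ}
    (f : (Fin n → ℝ) → (Fin m → ℝ) → ℝ) (δ : ℝ) (hδ : 0 < δ) (hA2 : A2Hyp f δ)
    (A11 : Matrix (Fin k) (Fin k) ℝ) (B1 : Matrix (Fin k) (Fin m) ℝ)
    (hc : Controllable A11 B1)
    (P₁ : Matrix (Fin n) (Fin k) ℝ) (hP₁ : P₁ᵀ * P₁ = 1)
    (P₂ : Matrix (Fin n) (Fin l) ℝ) (y2s : Fin l → ℝ) :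
    ∀ R : ℝ, ∃ M : ℝ, ∀ (z : Fin k → ℝ) (u : Fin m → ℝ) (ν : Fin k → ℝ),
      M ≤ Real.sqrt (vnorm z ^ 2 + vnorm u ^ 2 + vnorm ν ^ 2) →
      R ≤ Real.sqrt
        (vnorm (P₁ᵀ.mulVec (gradX f (P₁.mulVec z + P₂.mulVec y2s) u) + A11ᵀ.mulVec ν) ^ 2 +
         vnorm (gradU f (P₁.mulVec z + P₂.mulVec y2s) u + B1ᵀ.mulVec ν) ^ 2 +
         vnorm (A11.mulVec z + B1.mulVec u) ^ 2) := by
  intro R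
  have hf := contDiff_stacked hA2.1
  have hΦ : ContDiff ℝ 2 (reducedObjective f P₁ P₂ y2s) := contDiff_reducedObjective hf
  obtain ⟨M, hM⟩ := kkt_coercive (continuous_gradient (hΦ.of_le one_le_two)) hδ
    (mul_norm_sub_sq_le_inner_gradient_sub hΦ
      (mul_norm_sq_le_iteratedFDeriv_reducedObjective hA2 hP₁))
    (injective_adjoint_constraintMap hc) R
  refine ⟨M, fun z u ν h => ?_⟩
  have := hM (toLp 2 (Sum.elim z u)) (toLp 2 ν)
    (by simpa only [norm_toLp_sumElim_sq, ← vnorm_eq_norm] using h)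
  rwa [gradient_reducedObjective (hf.differentiable (by norm_num)), adjoint_constraintMap_toLp,
    ← WithLp.toLp_add, ← Sum.elim_add_add, norm_toLp_sumElim_sq, constraintMap_toLp,
    ← vnorm_eq_norm, ← vnorm_eq_norm, ← vnorm_eq_norm] at this

end Turnpike
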